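/- Quantum Pinsker inequality: for density operators ρ, σ on a finite-dimensional Hilbert space, the quantum relative entropy satisfies D(ρ‖σ) ≥ (1/2)·‖ρ − σ‖_1², where ‖·‖_1 is the trace norm. -/

import Mathlib

open scoped ComplexConjugate ComplexOrder
open Matrix

noncomputable section

variable {α β : Type*} [Fintype α] [DecidableEq α] [Fintype β] [DecidableEq β]

/-- A density matrix: positive semidefinite with unit trace. -/
def IsDensityMatrix (ρ : Matrix α α ℂ) : Prop := ρ.PosSemidef ∧ ρ.trace = 1

/-- Kronecker (tensor) product of two matrices, indexed by pairs. -/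
def prodMat (A : Matrix α α ℂ) (B : Matrix β β ℂ) : Matrix (α × β) (α × β) ℂ :=
  fun x y => A x.1 y.1 * B x.2 y.2

/-- A separable state on `H_A ⊗ H_B`: a convex combination of product states. -/
def IsSeparableState (σ : Matrix (α × β) (α × β) ℂ) : Prop :=
  ∃ (k : ℕ) (w : Fin k → ℝ) (ρA : Fin k → Matrix α α ℂ) (ρB : Fin k → Matrix β β ℂ),
    (∀ i, 0 ≤ w i) ∧ (∑ i, w i = 1) ∧
    (∀ i, IsDensityMatrix (ρA i)) ∧ (∀ i, IsDensityMatrix (ρB i)) ∧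
    σ = ∑ i, (w i : ℂ) • prodMat (ρA i) (ρB i)

/-- Trace norm of a Hermitian matrix: the sum of absolute values of eigenvalues
(junk value `0` on non-Hermitian input). -/
def traceNorm (A : Matrix α α ℂ) : ℝ :=
  if h : A.IsHermitian then ∑ i, |h.eigenvalues i| else 0

/-- Von Neumann entropy of a Hermitian matrix: `∑ᵢ −λᵢ log λᵢ`
(junk value `0` on non-Hermitian input). -/
def vonNeumannEntropy (A : Matrix α α ℂ) : ℝ :=
  if h : A.IsHermitian then ∑ i, Real.negMulLog (h.eigenvalues i) else 0

/-- Functional calculus logarithm of a Hermitian matrix, with the convention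
`log 0 = 0` on the kernel (junk value `0` on non-Hermitian input). -/
def matLog (A : Matrix α α ℂ) : Matrix α α ℂ :=
  if h : A.IsHermitian then
    (h.eigenvectorUnitary : Matrix α α ℂ) *
      Matrix.diagonal (fun i => (Real.log (h.eigenvalues i) : ℂ)) *
      star (h.eigenvectorUnitary : Matrix α α ℂ)
  else 0

/-- Quantum relative entropy `D(ρ‖σ) = Tr ρ (log ρ − log σ)`
(the finite value; it agrees with the usual definition when `supp ρ ⊆ supp σ`). -/
def relEntropy (ρ σ : Matrix α α ℂ) : ℝ :=
  (Matrix.trace (ρ * (matLog ρ - matLog σ))).re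

/-- Partial trace over the second factor. -/
def ptraceB (M : Matrix (α × β) (α × β) ℂ) : Matrix α α ℂ :=
  fun i j => ∑ b, M (i, b) (j, b)

/-- Rank-one projector `|φ⟩⟨φ|` onto a vector. -/
def vecProj (φ : α → ℂ) : Matrix α α ℂ := fun x y => φ x * conj (φ y)

/-- Entanglement of formation: infimum over pure-state ensembles decomposing `ρ` of the
average entropy of entanglement. -/
def entanglementOfFormation (ρ : Matrix (α × β) (α × β) ℂ) : ℝ :=
  sInf {e : ℝ | ∃ (k : ℕ) (p : Fin k → ℝ) (φ : Fin k → (α × β → ℂ)),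
    (∀ i, 0 ≤ p i) ∧ (∀ i, ∑ x, ‖φ i x‖ ^ 2 = 1) ∧
    ρ = ∑ i, (p i : ℂ) • vecProj (φ i) ∧
    e = ∑ i, p i * vonNeumannEntropy (ptraceB (vecProj (φ i)))}

end


section PinskerHelpers
open Real


private lemma xlogx_hasDeriv {r : ℝ} (hr : 0 < r) :
    HasDerivAt (fun x : ℝ => x * Real.log x) (Real.log r + 1) r := by
  have := (hasDerivAt_id r).mul (Real.hasDerivAt_log hr.ne')
  exact this.congr_deriv (by simp only [id_eq, one_mul, mul_inv_cancel₀ hr.ne'])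

private lemma f1_hasDeriv (s : ℝ) {r : ℝ} (hr : 0 < r) :
    HasDerivAt (fun x => (x*Real.log x - x*Real.log s) - x + s)
      (Real.log r - Real.log s) r := by
  have h1 := (((xlogx_hasDeriv hr).sub ((hasDerivAt_id r).mul_const (Real.log s))).sub
      (hasDerivAt_id r)).add_const s
  refine h1.congr_deriv ?_
  ring

private lemma phi_hasDeriv (s : ℝ) {r : ℝ} (hr : 0 < r) :
    HasDerivAt (fun x => 2*((x*Real.log x - x*Real.log s) - x + s)*(x+2*s) - 3*(x-s)^2)
      (2*((Real.log r - Real.log s)*(r+2*s) + ((r*Real.log r - r*Real.log s) - r + s))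
        - 6*(r-s)) r := by
  have h1 := ((f1_hasDeriv s hr).const_mul 2).mul ((hasDerivAt_id r).add_const (2*s))
  have h2 := (((hasDerivAt_id r).sub_const s).pow 2).const_mul 3
  have h3 := h1.sub h2
  refine h3.congr_deriv ?_
  simp only [id_eq]; push_cast; ring

private lemma psi_hasDeriv (s : ℝ) {r : ℝ} (hr : 0 < r) :
    HasDerivAt (fun x => 2*((Real.log x - Real.log s)*(x+2*s) + ((x*Real.log x - x*Real.log s) - x + s)) - 6*(x-s))
      (2*(r⁻¹*(r+2*s) + (Real.log r - Real.log s) + (Real.log r - Real.log s)) - 6) r := by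
  have h1 := (((Real.hasDerivAt_log hr.ne').sub_const (Real.log s)).mul ((hasDerivAt_id r).add_const (2*s)))
  have h2 := ((h1.add (f1_hasDeriv s hr)).const_mul 2).sub (((hasDerivAt_id r).sub_const s).const_mul 6)
  refine h2.congr_deriv ?_
  simp only [id_eq]; ring

private lemma psi_deriv_nonneg (s : ℝ) (hs : 0 < s) {x : ℝ} (hx : 0 < x) :
    0 ≤ 2*(x⁻¹*(x+2*s) + (Real.log x - Real.log s) + (Real.log x - Real.log s)) - 6 := by
  have hL : 1 - s*x⁻¹ ≤ Real.log x - Real.log s := by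
    have h := Real.one_sub_inv_le_log_of_pos (div_pos hx hs)
    rw [Real.log_div hx.ne' hs.ne'] at h
    have : (x/s)⁻¹ = s*x⁻¹ := by field_simp
    linarith [this ▸ h]
  have hxx : x*x⁻¹ = 1 := mul_inv_cancel₀ hx.ne'
  nlinarith [hL, hxx]

private lemma psi_mono (s : ℝ) (hs : 0 < s) (a b : ℝ) (ha : 0 < a) :
    MonotoneOn (fun x => 2*((Real.log x - Real.log s)*(x+2*s) + ((x*Real.log x - x*Real.log s) - x + s)) - 6*(x-s))
      (Set.Icc a b) := by
  rcases le_or_gt b a with h | h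
  · intro u hu v hv huv
    have : u = v := le_antisymm huv (by
      have := hu.2.trans (h.trans hv.1); linarith [hu.1, hv.2, this])
    simp [this]
  apply monotoneOn_of_deriv_nonneg (convex_Icc a b)
  · intro x hx
    exact ((psi_hasDeriv s (ha.trans_le hx.1)).continuousAt).continuousWithinAt
  · intro x hx
    rw [interior_Icc] at hx
    exact ((psi_hasDeriv s (ha.trans hx.1)).differentiableAt).differentiableWithinAt
  · intro x hx
    rw [interior_Icc] at hx
    have hx0 : 0 < x := ha.trans hx.1
    rw [(psi_hasDeriv s hx0).deriv]
    exact psi_deriv_nonneg s hs hx0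

private lemma psi_sign (s : ℝ) (hs : 0 < s) {r : ℝ} (hr : 0 < r) :
    (s ≤ r → 0 ≤ 2*((Real.log r - Real.log s)*(r+2*s) + ((r*Real.log r - r*Real.log s) - r + s)) - 6*(r-s)) ∧
    (r ≤ s → 2*((Real.log r - Real.log s)*(r+2*s) + ((r*Real.log r - r*Real.log s) - r + s)) - 6*(r-s) ≤ 0) := by
  have hzero : 2*((Real.log s - Real.log s)*(s+2*s) + ((s*Real.log s - s*Real.log s) - s + s)) - 6*(s-s) = 0 := by
    ring
  constructor
  · intro hsr
    have := psi_mono s hs s r hs ⟨le_refl s, hsr⟩ ⟨hsr, le_refl r⟩ hsr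
    simpa [hzero] using this
  · intro hrs
    have := psi_mono s hs r s hr ⟨le_refl r, hrs⟩ ⟨hrs, le_refl s⟩ hrs
    simpa [hzero] using this

private lemma phi_zero (s : ℝ) :
    2*((s*Real.log s - s*Real.log s) - s + s)*(s+2*s) - 3*(s-s)^2 = 0 := by ring

private lemma phi_mono (s : ℝ) (hs : 0 < s) (b : ℝ) :
    MonotoneOn (fun x => 2*((x*Real.log x - x*Real.log s) - x + s)*(x+2*s) - 3*(x-s)^2)
      (Set.Icc s b) := by
  apply monotoneOn_of_deriv_nonneg (convex_Icc s b)
  · exact fun x hx => ((phi_hasDeriv s (hs.trans_le hx.1)).continuousAt).continuousWithinAt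
  · intro x hx
    rw [interior_Icc] at hx
    exact ((phi_hasDeriv s (hs.trans hx.1)).differentiableAt).differentiableWithinAt
  · intro x hx
    rw [interior_Icc] at hx
    have hx0 : 0 < x := hs.trans hx.1
    rw [(phi_hasDeriv s hx0).deriv]
    exact (psi_sign s hs hx0).1 hx.1.le

private lemma phi_anti (s : ℝ) (hs : 0 < s) (a : ℝ) (ha : 0 < a) :
    AntitoneOn (fun x => 2*((x*Real.log x - x*Real.log s) - x + s)*(x+2*s) - 3*(x-s)^2)
      (Set.Icc a s) := by
  apply antitoneOn_of_deriv_nonpos (convex_Icc a s)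
  · exact fun x hx => ((phi_hasDeriv s (ha.trans_le hx.1)).continuousAt).continuousWithinAt
  · intro x hx
    rw [interior_Icc] at hx
    exact ((phi_hasDeriv s (ha.trans hx.1)).differentiableAt).differentiableWithinAt
  · intro x hx
    rw [interior_Icc] at hx
    have hx0 : 0 < x := ha.trans hx.1
    rw [(phi_hasDeriv s hx0).deriv]
    exact (psi_sign s hs hx0).2 hx.2.le

private lemma phi_nonneg (s : ℝ) (hs : 0 < s) {r : ℝ} (hr : 0 ≤ r) :
    0 ≤ 2*((r*Real.log r - r*Real.log s) - r + s)*(r+2*s) - 3*(r-s)^2 := by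
  rcases eq_or_lt_of_le hr with h0 | hr0
  · rw [← h0]
    simp only [zero_mul, Real.log_zero, mul_zero]
    nlinarith [hs]
  rcases lt_trichotomy r s with hlt | heq | hgt
  · have := phi_anti s hs r hr0 ⟨le_refl r, hlt.le⟩ ⟨hlt.le, le_refl s⟩ hlt.le
    calc (0:ℝ) = _ := (phi_zero s).symm
      _ ≤ _ := this
  · rw [heq]; rw [phi_zero s]
  · have := phi_mono s hs r ⟨le_refl s, hgt.le⟩ ⟨hgt.le, le_refl r⟩ hgt.le
    calc (0:ℝ) = _ := (phi_zero s).symm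
      _ ≤ _ := this

/-- The key scalar inequality: `(r−s)²·3/(r+2s) ≤ 2(r log r − r log s − r + s)`. -/
private lemma scalar_div {r s : ℝ} (hr : 0 ≤ r) (hs : 0 < s) :
    (r-s)^2 * (3/(r+2*s)) ≤ 2*((r*Real.log r - r*Real.log s) - r + s) := by
  have hx : 0 < r + 2*s := by linarith
  have h := phi_nonneg s hs hr
  rw [mul_comm, div_mul_eq_mul_div, div_le_iff₀ hx]
  nlinarith [h]


section MatHelpers
variable {α : Type*} [Fintype α] [DecidableEq α]

private lemma diag_trace (E Q : Matrix α α ℂ) (d : α → ℂ) :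
    Matrix.trace (E * (Q * Matrix.diagonal d * star Q)) = ∑ j, d j * (star Q * E * Q) j j := by
  rw [show E * (Q * Matrix.diagonal d * star Q) = E * (Q * Matrix.diagonal d) * star Q by
    noncomm_ring]
  rw [Matrix.trace_mul_cycle, show star Q * E * (Q * Matrix.diagonal d)
    = (star Q * E * Q) * Matrix.diagonal d by noncomm_ring]
  rw [Matrix.trace]
  simp only [Matrix.diag_apply, Matrix.mul_diagonal]
  exact Finset.sum_congr rfl fun j _ => mul_comm _ _

private lemma entry_form (P Q : Matrix α α ℂ) (f : α → ℝ) (j : α) :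
    (star Q * (P * Matrix.diagonal (fun k => (f k : ℂ)) * star P) * Q) j j
      = ((∑ k, f k * ‖(star P * Q) k j‖^2 : ℝ) : ℂ) := by
  have h1 : star Q * (P * Matrix.diagonal (fun k => (f k : ℂ)) * star P) * Q
      = (star (star P * Q)) * (Matrix.diagonal (fun k => (f k : ℂ)) * (star P * Q)) := by
    simp only [Matrix.star_mul, star_star]
    noncomm_ring
  rw [h1, Matrix.mul_apply]
  push_cast
  refine Finset.sum_congr rfl fun k _ => ?_
  rw [Matrix.diagonal_mul, Matrix.star_apply]
  have : star ((star P * Q) k j) * ((f k : ℂ) * (star P * Q) k j)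
      = (f k : ℂ) * ((star P * Q) k j * star ((star P * Q) k j)) := by ring
  rw [this]
  rw [show (star ((star P * Q) k j) : ℂ) = (starRingEnd ℂ) ((star P * Q) k j) from rfl,
    Complex.mul_conj, Complex.normSq_eq_norm_sq]
  push_cast
  ring

private lemma trace_form (P Q : Matrix α α ℂ) (f g : α → ℝ) :
    (Matrix.trace ((P * Matrix.diagonal (fun k => (f k : ℂ)) * star P) *
        (Q * Matrix.diagonal (fun j => (g j : ℂ)) * star Q))).re
      = ∑ k, ∑ j, f k * g j * ‖(star P * Q) k j‖^2 := by
  rw [← Matrix.trace_mul_comm, diag_trace]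
  simp only [entry_form]
  rw [show (∑ x, ((f x : ℂ) * ((∑ k, g k * ‖(star Q * P) k x‖^2 : ℝ) : ℂ)))
      = ((∑ x, f x * ∑ k, g k * ‖(star Q * P) k x‖^2 : ℝ) : ℂ) by push_cast; ring,
    Complex.ofReal_re]
  refine Finset.sum_congr rfl fun x _ => ?_
  rw [Finset.mul_sum]
  refine Finset.sum_congr rfl fun j _ => ?_
  have h2 : (star Q * P) j x = star ((star P * Q) x j) := by
    rw [show star Q * P = star (star P * Q) by simp [Matrix.star_mul, star_star]]
    rfl
  rw [h2, norm_star]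
  ring


private lemma mul_star_norm (z : ℂ) : z * star z = ((‖z‖^2 : ℝ) : ℂ) := by
  rw [show (star z : ℂ) = (starRingEnd ℂ) z from rfl, Complex.mul_conj,
    Complex.normSq_eq_norm_sq]

private lemma row_sums {W : Matrix α α ℂ} (h : W * star W = 1) (k : α) :
    ∑ j, ‖W k j‖^2 = 1 := by
  have h1 := congrArg (fun X : Matrix α α ℂ => (X k k).re) h
  simp only [Matrix.mul_apply, Matrix.one_apply_eq] at h1
  rw [show (∑ j, W k j * star W j k) = ((∑ j, ‖W k j‖^2 : ℝ) : ℂ) by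
    rw [Complex.ofReal_sum]
    refine Finset.sum_congr rfl fun j _ => ?_
    rw [Matrix.star_apply, mul_star_norm], Complex.ofReal_re] at h1
  exact h1

private lemma col_sums {W : Matrix α α ℂ} (h : star W * W = 1) (j : α) :
    ∑ k, ‖W k j‖^2 = 1 := by
  have := row_sums (W := star W) (by rw [star_star, h]) j
  simp only [Matrix.star_apply, norm_star] at this
  exact this

end MatHelpers
end PinskerHelpers

noncomputable section
variable {α : Type*} [Fintype α] [DecidableEq α]

/-- Quantum Pinsker inequality: for density operators `ρ, σ` with
`supp ρ ⊆ supp σ`, `D(ρ‖σ) ≥ (1/2)·‖ρ − σ‖₁²`. -/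
theorem quantum_pinsker (ρ σ : Matrix α α ℂ)
    (hρ : IsDensityMatrix ρ) (hσ : IsDensityMatrix σ)
    (hsupp : ∀ v : α → ℂ, σ.mulVec v = 0 → ρ.mulVec v = 0) :
    relEntropy ρ σ ≥ (1 / 2) * traceNorm (ρ - σ) ^ 2 := by
  classical
  obtain ⟨hρp, hρtr⟩ := hρ
  obtain ⟨hσp, hσtr⟩ := hσ
  have hA : ρ.IsHermitian := hρp.1
  have hB : σ.IsHermitian := hσp.1
  have hΔ : (ρ - σ).IsHermitian := hA.sub hB
  set r : α → ℝ := hA.eigenvalues with hr_def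
  set s : α → ℝ := hB.eigenvalues with hs_def
  set μ : α → ℝ := hΔ.eigenvalues with hμ_def
  set U : Matrix α α ℂ := (hA.eigenvectorUnitary : Matrix α α ℂ) with hU_def
  set V : Matrix α α ℂ := (hB.eigenvectorUnitary : Matrix α α ℂ) with hV_def
  set T : Matrix α α ℂ := (hΔ.eigenvectorUnitary : Matrix α α ℂ) with hT_def
  have hUU : U * star U = 1 := (Matrix.mem_unitaryGroup_iff).mp hA.eigenvectorUnitary.2
  have hUU' : star U * U = 1 := (Matrix.mem_unitaryGroup_iff').mp hA.eigenvectorUnitary.2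
  have hVV : V * star V = 1 := (Matrix.mem_unitaryGroup_iff).mp hB.eigenvectorUnitary.2
  have hVV' : star V * V = 1 := (Matrix.mem_unitaryGroup_iff').mp hB.eigenvectorUnitary.2
  have hTT : T * star T = 1 := (Matrix.mem_unitaryGroup_iff).mp hΔ.eigenvectorUnitary.2
  have hTT' : star T * T = 1 := (Matrix.mem_unitaryGroup_iff').mp hΔ.eigenvectorUnitary.2
  have hρ_eq : ρ = U * Matrix.diagonal (fun k => (r k : ℂ)) * star U := hA.spectral_theorem
  have hσ_eq : σ = V * Matrix.diagonal (fun j => (s j : ℂ)) * star V := hB.spectral_theorem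
  have hΔ_eq : ρ - σ = T * Matrix.diagonal (fun i => (μ i : ℂ)) * star T := hΔ.spectral_theorem
  have hlogρ : matLog ρ = U * Matrix.diagonal (fun k => ((Real.log (r k) : ℝ) : ℂ)) * star U := by
    rw [matLog, dif_pos hA]
  have hlogσ : matLog σ = V * Matrix.diagonal (fun j => ((Real.log (s j) : ℝ) : ℂ)) * star V := by
    rw [matLog, dif_pos hB]
  have htn : traceNorm (ρ - σ) = ∑ i, |μ i| := by
    rw [traceNorm, dif_pos hΔ]
  have hrpos : ∀ k, 0 ≤ r k := hρp.eigenvalues_nonneg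
  have hspos : ∀ j, 0 ≤ s j := hσp.eigenvalues_nonneg
  -- eigenvalue sums
  have hrsum : ∑ k, r k = 1 := by
    have h1 : Matrix.trace ρ = ∑ k, (r k : ℂ) := by
      rw [hρ_eq, Matrix.trace_mul_cycle, hUU', one_mul, Matrix.trace_diagonal]
    have h2 := congrArg Complex.re (h1.symm.trans hρtr)
    rw [Complex.re_sum] at h2
    simpa using h2
  have hssum : ∑ j, s j = 1 := by
    have h1 : Matrix.trace σ = ∑ j, (s j : ℂ) := by
      rw [hσ_eq, Matrix.trace_mul_cycle, hVV', one_mul, Matrix.trace_diagonal]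
    have h2 := congrArg Complex.re (h1.symm.trans hσtr)
    rw [Complex.re_sum] at h2
    simpa using h2
  -- sign unitary
  set ε : α → ℝ := fun i => if 0 ≤ μ i then 1 else -1 with hε_def
  have hεsq : ∀ i, (ε i : ℂ) * (ε i : ℂ) = 1 := by
    intro i; rw [hε_def]; by_cases h : 0 ≤ μ i <;> simp [h]
  have hεμ : ∀ i, ε i * μ i = |μ i| := by
    intro i; rw [hε_def]
    by_cases h : 0 ≤ μ i
    · simp [h, abs_of_nonneg h]
    · simp [h, abs_of_neg (lt_of_not_ge h)]
  set E : Matrix α α ℂ := T * Matrix.diagonal (fun i => (ε i : ℂ)) * star T with hE_def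
  have hE_star : star E = E := by
    rw [hE_def]
    simp only [Matrix.star_mul, star_star]
    rw [Matrix.star_eq_conjTranspose, Matrix.diagonal_conjTranspose]
    rw [show (star (fun i => (ε i : ℂ)) : α → ℂ) = fun i => (ε i : ℂ) by
      funext i; simp [Complex.star_def, Complex.conj_ofReal]]
    noncomm_ring
  have hEE : E * E = 1 := by
    rw [hE_def]
    have : T * Matrix.diagonal (fun i => (ε i : ℂ)) * star T *
        (T * Matrix.diagonal (fun i => (ε i : ℂ)) * star T)
        = T * (Matrix.diagonal (fun i => (ε i : ℂ)) * ((star T * T) *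
            Matrix.diagonal (fun i => (ε i : ℂ)))) * star T := by noncomm_ring
    rw [this, hTT', one_mul, Matrix.diagonal_mul_diagonal]
    rw [show (fun i => (ε i : ℂ) * (ε i : ℂ)) = fun i => (1 : ℂ) by
      funext i; exact hεsq i]
    rw [Matrix.diagonal_one, mul_one, hTT]
  set M : Matrix α α ℂ := star U * V with hM_def
  set N : Matrix α α ℂ := star U * E * V with hN_def
  have hM_unit : M * star M = 1 := by
    rw [hM_def]
    simp only [Matrix.star_mul, star_star]
    rw [show star U * V * (star V * U) = star U * (V * star V) * U by noncomm_ring,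
      hVV, mul_one, hUU']
  have hM_unit' : star M * M = 1 := by
    rw [hM_def]
    simp only [Matrix.star_mul, star_star]
    rw [show star V * U * (star U * V) = star V * (U * star U) * V by noncomm_ring,
      hUU, mul_one, hVV']
  have hN_unit : N * star N = 1 := by
    rw [hN_def]
    simp only [Matrix.star_mul, star_star]
    rw [show star U * E * V * (star V * (star E * U)) = star U * (E * (V * star V) * star E) * U
      by noncomm_ring, hVV, mul_one, hE_star, hEE, mul_one, hUU']
  have hN_unit' : star N * N = 1 := by
    rw [hN_def]
    simp only [Matrix.star_mul, star_star]
    rw [show star V * (star E * U) * (star U * E * V) = star V * (star E * (U * star U) * E) * V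
      by noncomm_ring, hUU, mul_one, hE_star, hEE, mul_one, hVV']
  have hMrow : ∀ k, ∑ j, ‖M k j‖^2 = 1 := row_sums hM_unit
  have hMcol : ∀ j, ∑ k, ‖M k j‖^2 = 1 := col_sums hM_unit'
  have hNrow : ∀ k, ∑ j, ‖N k j‖^2 = 1 := row_sums hN_unit
  have hNcol : ∀ j, ∑ k, ‖N k j‖^2 = 1 := col_sums hN_unit'
  -- support condition in eigencoordinates
  have hsupp' : ∀ j, s j = 0 → ∀ k, r k * ‖M k j‖^2 = 0 := by
    intro j hsj
    have hy : σ *ᵥ (fun i => V i j) = 0 := by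
      have hy0 : (fun i => V i j) = V *ᵥ Pi.single j 1 := by
        funext i; simp [Matrix.mulVec_single]
      rw [hy0, Matrix.mulVec_mulVec, hσ_eq]
      rw [show (V * Matrix.diagonal (fun j => (s j : ℂ)) * star V) * V
          = V * Matrix.diagonal (fun j => (s j : ℂ)) * (star V * V) by noncomm_ring, hVV',
        mul_one, ← Matrix.mulVec_mulVec, Matrix.diagonal_mulVec_single]
      rw [show ((s j : ℂ) * 1) = 0 by rw [hsj]; simp]
      simp
    have hρy := hsupp _ hy
    have hcol : ∀ i, (ρ * V) i j = 0 := by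
      intro i
      have h5 : (ρ * V) i j = (ρ *ᵥ fun i => V i j) i := by
        simp [Matrix.mul_apply, Matrix.mulVec, dotProduct]
      rw [h5, hρy]; rfl
    have h2 : ((star V * (ρ * V)) j j) = ((∑ k, r k * ‖M k j‖^2 : ℝ) : ℂ) := by
      have hrw : star V * (ρ * V) = star M * (Matrix.diagonal (fun k => (r k : ℂ)) * M) := by
        rw [hρ_eq, hM_def]
        simp only [Matrix.star_mul, star_star]
        noncomm_ring
      rw [hrw, Matrix.mul_apply, Complex.ofReal_sum]
      refine Finset.sum_congr rfl fun k _ => ?_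
      rw [Matrix.star_apply, Matrix.diagonal_mul]
      rw [show star (M k j) * ((r k : ℂ) * M k j) = (r k : ℂ) * (M k j * star (M k j)) by ring,
        mul_star_norm]
      push_cast; ring
    have h3 : ((star V * (ρ * V)) j j) = 0 := by
      rw [Matrix.mul_apply]
      exact Finset.sum_eq_zero fun i _ => by rw [hcol i, mul_zero]
    have h4 : ∑ k, r k * ‖M k j‖^2 = 0 := by
      have h6 := h2.symm.trans h3
      exact_mod_cast h6
    intro k
    exact (Finset.sum_eq_zero_iff_of_nonneg
      (fun k _ => mul_nonneg (hrpos k) (sq_nonneg _))).mp h4 k (Finset.mem_univ k)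
  -- relative entropy in eigencoordinates
  have hterm1 : (Matrix.trace (ρ * matLog ρ)).re = ∑ k, r k * Real.log (r k) := by
    rw [hlogρ, hρ_eq, trace_form U U r (fun k => Real.log (r k)), hUU']
    refine Finset.sum_congr rfl fun k _ => ?_
    rw [Finset.sum_eq_single k]
    · simp [Matrix.one_apply_eq]
    · intro j _ hjk
      rw [Matrix.one_apply_ne (Ne.symm hjk)]
      simp
    · intro h; exact absurd (Finset.mem_univ k) h
  have hterm2 : (Matrix.trace (ρ * matLog σ)).re = ∑ k, ∑ j, r k * Real.log (s j) * ‖M k j‖^2 := by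
    rw [hlogσ, hρ_eq, trace_form U V r (fun j => Real.log (s j)), ← hM_def]
  have hD : relEntropy ρ σ = ∑ k, ∑ j, (r k * Real.log (r k) - r k * Real.log (s j)) * ‖M k j‖^2 := by
    rw [relEntropy, mul_sub, Matrix.trace_sub, Complex.sub_re, hterm1, hterm2,
      ← Finset.sum_sub_distrib]
    refine Finset.sum_congr rfl fun k _ => ?_
    rw [show ∑ j, (r k * Real.log (r k) - r k * Real.log (s j)) * ‖M k j‖^2
        = ∑ j, ((r k * Real.log (r k)) * ‖M k j‖^2 - r k * Real.log (s j) * ‖M k j‖^2) from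
      Finset.sum_congr rfl fun j _ => by ring]
    rw [Finset.sum_sub_distrib, ← Finset.mul_sum, hMrow k, mul_one]
  -- trace norm in eigencoordinates
  have hre_swap : ∀ a b : ℂ, (star a * b).re = (a * star b).re := by
    intro a b
    simp only [Complex.mul_re, Complex.star_def, Complex.conj_re, Complex.conj_im]
    ring
  have ht_rho : (Matrix.trace (E * ρ)).re = ∑ k, ∑ j, r k * (N k j * star (M k j)).re := by
    rw [hρ_eq, diag_trace E U (fun k => (r k : ℂ))]
    have hNM : star U * E * U = N * star M := by
      rw [hN_def, hM_def]
      simp only [Matrix.star_mul, star_star]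
      rw [show star U * E * V * (star V * U) = star U * E * (V * star V) * U by noncomm_ring,
        hVV, mul_one]
    rw [hNM, Complex.re_sum]
    refine Finset.sum_congr rfl fun k _ => ?_
    rw [Matrix.mul_apply, Complex.re_ofReal_mul, Complex.re_sum, Finset.mul_sum]
    refine Finset.sum_congr rfl fun j _ => ?_
    rw [Matrix.star_apply]
  have ht_sigma : (Matrix.trace (E * σ)).re = ∑ j, ∑ k, s j * (N k j * star (M k j)).re := by
    rw [hσ_eq, diag_trace E V (fun j => (s j : ℂ))]
    have hNM2 : star V * E * V = star N * M := by
      rw [hN_def, hM_def]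
      simp only [Matrix.star_mul, star_star]
      rw [show star V * (star E * U) * (star U * V) = star V * (star E * (U * star U)) * V
        by noncomm_ring, hUU, mul_one, hE_star]
    rw [hNM2, Complex.re_sum]
    refine Finset.sum_congr rfl fun j _ => ?_
    rw [Matrix.mul_apply, Complex.re_ofReal_mul, Complex.re_sum, Finset.mul_sum]
    refine Finset.sum_congr rfl fun k _ => ?_
    rw [Matrix.star_apply, hre_swap]
  have htnE : ∑ i, |μ i| = (Matrix.trace (E * (ρ - σ))).re := by
    rw [hΔ_eq, hE_def, trace_form T T ε μ, hTT']
    refine (Finset.sum_congr rfl fun i _ => ?_).symm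
    rw [Finset.sum_eq_single i]
    · rw [Matrix.one_apply_eq]
      simp [hεμ i]
    · intro l _ hli
      rw [Matrix.one_apply_ne (Ne.symm hli)]
      simp
    · intro h; exact absurd (Finset.mem_univ i) h
  have htn_sum : traceNorm (ρ - σ) = ∑ k, ∑ j, (r k - s j) * (N k j * star (M k j)).re := by
    rw [htn, htnE, mul_sub, Matrix.trace_sub, Complex.sub_re, ht_rho, ht_sigma,
      Finset.sum_comm (f := fun j k => s j * (N k j * star (M k j)).re), ← Finset.sum_sub_distrib]
    refine Finset.sum_congr rfl fun k _ => ?_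
    rw [← Finset.sum_sub_distrib]
    refine Finset.sum_congr rfl fun j _ => ?_
    ring
  -- Cauchy–Schwarz
  have htn_nonneg : 0 ≤ traceNorm (ρ - σ) := by
    rw [htn]
    exact Finset.sum_nonneg fun i _ => abs_nonneg _
  have key := Finset.sum_mul_sq_le_sq_mul_sq Finset.univ
    (fun p : α × α => |r p.1 - s p.2| * ‖M p.1 p.2‖ * Real.sqrt (3/(r p.1 + 2*s p.2)))
    (fun p : α × α => ‖N p.1 p.2‖ * Real.sqrt ((r p.1 + 2*s p.2)/3))
  have hstep1 : traceNorm (ρ - σ) ≤ ∑ p : α × α,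
      (|r p.1 - s p.2| * ‖M p.1 p.2‖ * Real.sqrt (3/(r p.1 + 2*s p.2))) *
      (‖N p.1 p.2‖ * Real.sqrt ((r p.1 + 2*s p.2)/3)) := by
    rw [htn_sum, Fintype.sum_prod_type]
    apply Finset.sum_le_sum
    intro k _
    apply Finset.sum_le_sum
    intro j _
    set p : α × α := (k, j) with hp_def
    show (r p.1 - s p.2) * (N p.1 p.2 * star (M p.1 p.2)).re ≤ _
    have hx : 0 ≤ r p.1 + 2*s p.2 := by
      have := hrpos p.1; have := hspos p.2; linarith
    have hab : (|r p.1 - s p.2| * ‖M p.1 p.2‖ * Real.sqrt (3/(r p.1 + 2*s p.2))) *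
        (‖N p.1 p.2‖ * Real.sqrt ((r p.1 + 2*s p.2)/3))
        = |r p.1 - s p.2| * ‖M p.1 p.2‖ * ‖N p.1 p.2‖ *
          (Real.sqrt (3/(r p.1 + 2*s p.2)) * Real.sqrt ((r p.1 + 2*s p.2)/3)) := by ring
    rcases eq_or_lt_of_le hx with h0 | h0
    · have hs0 : s p.2 = 0 := by
        have := hrpos p.1; have := hspos p.2; linarith
      have hr0 : r p.1 = 0 := by
        have := hspos p.2; linarith
      rw [hab, hr0, hs0]
      simp
    · have h1 : Real.sqrt (3/(r p.1 + 2*s p.2)) * Real.sqrt ((r p.1 + 2*s p.2)/3) = 1 := by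
        rw [← Real.sqrt_mul (by positivity),
          show 3/(r p.1 + 2*s p.2) * ((r p.1 + 2*s p.2)/3) = 1 by field_simp]
        exact Real.sqrt_one
      rw [hab, h1, mul_one]
      calc (r p.1 - s p.2) * (N p.1 p.2 * star (M p.1 p.2)).re
          ≤ |(r p.1 - s p.2) * (N p.1 p.2 * star (M p.1 p.2)).re| := le_abs_self _
        _ = |r p.1 - s p.2| * |(N p.1 p.2 * star (M p.1 p.2)).re| := abs_mul _ _
        _ ≤ |r p.1 - s p.2| * ‖N p.1 p.2 * star (M p.1 p.2)‖ := by
            apply mul_le_mul_of_nonneg_left _ (abs_nonneg _)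
            exact Complex.abs_re_le_norm _
        _ = |r p.1 - s p.2| * (‖N p.1 p.2‖ * ‖M p.1 p.2‖) := by rw [norm_mul, norm_star]
        _ = |r p.1 - s p.2| * ‖M p.1 p.2‖ * ‖N p.1 p.2‖ := by ring
  have hb1 : ∑ p : α × α, (‖N p.1 p.2‖ * Real.sqrt ((r p.1 + 2*s p.2)/3))^2 = 1 := by
    have hterm : ∀ p : α × α, (‖N p.1 p.2‖ * Real.sqrt ((r p.1 + 2*s p.2)/3))^2
        = ‖N p.1 p.2‖^2 * (r p.1/3) + ‖N p.1 p.2‖^2 * (2*s p.2/3) := by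
      intro p
      have hx : 0 ≤ (r p.1 + 2*s p.2)/3 := by
        have := hrpos p.1; have := hspos p.2; linarith
      rw [mul_pow, Real.sq_sqrt hx]
      ring
    simp only [hterm]
    rw [Finset.sum_add_distrib, Fintype.sum_prod_type, Fintype.sum_prod_type]
    have e1 : ∀ k, ∑ j, ‖N k j‖^2 * (r k/3) = r k/3 := by
      intro k
      rw [← Finset.sum_mul, hNrow k, one_mul]
    simp only [e1]
    rw [Finset.sum_comm]
    have e3 : ∀ j, ∑ k, ‖N k j‖^2 * (2*s j/3) = 2*s j/3 := by
      intro j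
      rw [← Finset.sum_mul, hNcol j, one_mul]
    simp only [e3]
    rw [← Finset.sum_div, hrsum]
    have e4 : ∑ j : α, 2*s j/3 = 2/3 := by
      rw [show (fun j => 2*s j/3) = fun j => (2/3)*s j by funext j; ring]
      rw [← Finset.mul_sum, hssum, mul_one]
    rw [e4]
    norm_num
  have ha1 : ∑ p : α × α, (|r p.1 - s p.2| * ‖M p.1 p.2‖ * Real.sqrt (3/(r p.1 + 2*s p.2)))^2
      ≤ 2 * relEntropy ρ σ := by
    have hterm : ∀ p : α × α, (|r p.1 - s p.2| * ‖M p.1 p.2‖ * Real.sqrt (3/(r p.1 + 2*s p.2)))^2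
        = (r p.1 - s p.2)^2 * (3/(r p.1 + 2*s p.2)) * ‖M p.1 p.2‖^2 := by
      intro p
      have hx : 0 ≤ 3/(r p.1 + 2*s p.2) := by
        have := hrpos p.1; have := hspos p.2
        apply div_nonneg (by norm_num) (by linarith)
      rw [mul_pow, mul_pow, sq_abs, Real.sq_sqrt hx]
      ring
    simp only [hterm]
    have hcell : ∀ p : α × α, (r p.1 - s p.2)^2 * (3/(r p.1 + 2*s p.2)) * ‖M p.1 p.2‖^2
        ≤ 2*((r p.1 * Real.log (r p.1) - r p.1 * Real.log (s p.2)) - r p.1 + s p.2)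
          * ‖M p.1 p.2‖^2 := by
      intro p
      by_cases hs0 : s p.2 = 0
      · have h8 := hsupp' p.2 hs0 p.1
        rcases mul_eq_zero.mp h8 with h9 | h9
        · rw [h9, hs0]
          simp
        · rw [h9]
          simp
      · have hs0' : 0 < s p.2 := lt_of_le_of_ne (hspos p.2) (Ne.symm hs0)
        have h10 := scalar_div (hrpos p.1) hs0'
        calc (r p.1 - s p.2)^2 * (3/(r p.1 + 2*s p.2)) * ‖M p.1 p.2‖^2
            ≤ (2*((r p.1 * Real.log (r p.1) - r p.1 * Real.log (s p.2)) - r p.1 + s p.2))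
              * ‖M p.1 p.2‖^2 := mul_le_mul_of_nonneg_right h10 (sq_nonneg _)
          _ = _ := by ring
    have hS2 : ∑ p : α × α, s p.2 * ‖M p.1 p.2‖^2 = 1 := by
      rw [Fintype.sum_prod_type, Finset.sum_comm]
      have e1 : ∀ j, ∑ k, s j * ‖M k j‖^2 = s j := by
        intro j
        rw [← Finset.mul_sum, hMcol j, mul_one]
      simp only [e1]
      exact hssum
    have hS3 : ∑ p : α × α, r p.1 * ‖M p.1 p.2‖^2 = 1 := by
      rw [Fintype.sum_prod_type]
      have e1 : ∀ k, ∑ j, r k * ‖M k j‖^2 = r k := by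
        intro k
        rw [← Finset.mul_sum, hMrow k, mul_one]
      simp only [e1]
      exact hrsum
    have hS1 : ∑ p : α × α, (r p.1 * Real.log (r p.1) - r p.1 * Real.log (s p.2)) * ‖M p.1 p.2‖^2
        = relEntropy ρ σ := by
      rw [Fintype.sum_prod_type, hD]
    calc ∑ p : α × α, (r p.1 - s p.2)^2 * (3/(r p.1 + 2*s p.2)) * ‖M p.1 p.2‖^2
        ≤ ∑ p : α × α, 2*((r p.1 * Real.log (r p.1) - r p.1 * Real.log (s p.2)) - r p.1 + s p.2)
            * ‖M p.1 p.2‖^2 := Finset.sum_le_sum fun p _ => hcell p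
      _ = ∑ p : α × α, (2*((r p.1 * Real.log (r p.1) - r p.1 * Real.log (s p.2)) * ‖M p.1 p.2‖^2)
            + 2*(s p.2 * ‖M p.1 p.2‖^2) - 2*(r p.1 * ‖M p.1 p.2‖^2)) :=
          Finset.sum_congr rfl fun p _ => by ring
      _ = 2 * relEntropy ρ σ := by
          rw [Finset.sum_sub_distrib, Finset.sum_add_distrib, ← Finset.mul_sum, ← Finset.mul_sum,
            ← Finset.mul_sum, hS1, hS2, hS3]
          ring
  -- final assembly
  have h7 : traceNorm (ρ - σ)^2 ≤ 2 * relEntropy ρ σ := by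
    calc traceNorm (ρ - σ)^2 ≤ (∑ p : α × α,
        (|r p.1 - s p.2| * ‖M p.1 p.2‖ * Real.sqrt (3/(r p.1 + 2*s p.2))) *
        (‖N p.1 p.2‖ * Real.sqrt ((r p.1 + 2*s p.2)/3)))^2 :=
          pow_le_pow_left₀ htn_nonneg hstep1 2
      _ ≤ (∑ p : α × α, (|r p.1 - s p.2| * ‖M p.1 p.2‖ * Real.sqrt (3/(r p.1 + 2*s p.2)))^2) *
          (∑ p : α × α, (‖N p.1 p.2‖ * Real.sqrt ((r p.1 + 2*s p.2)/3))^2) := key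
      _ ≤ 2 * relEntropy ρ σ := by rw [hb1, mul_one]; exact ha1
  linarith

end
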